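/- arXiv:2503.14794 — 2 statements merged into one kernel-verified Lean document; each statement's English description precedes it below -/
import Mathlib

section
/- Let p, p′ ∈ 𝒫**(2n). If (pᵗ)_C ≤ ((p′)ᵗ)_C in the dominance order, then p′ ≤ p in the dominance order. -/
open Finset

/-- A partition of `N`: an antitone function `ℕ → ℕ` (the 0-indexed parts, padded with
zeros) supported on `{0, …, N-1}` whose parts sum to `N`. -/
def IsPartition (N : ℕ) (p : ℕ → ℕ) : Prop :=
  Antitone p ∧ (∀ i, N ≤ i → p i = 0) ∧ ∑ i ∈ Finset.range N, p i = N

/-- Dominance order: `Dominates p q` means `q ≤ p`, i.e. every partial sum of the parts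
of `q` is at most the corresponding partial sum of the parts of `p`. -/
def Dominates (p q : ℕ → ℕ) : Prop :=
  ∀ j, ∑ i ∈ Finset.range j, q i ≤ ∑ i ∈ Finset.range j, p i

/-- Multiplicity of the value `k` among the first `N` parts of `p`. -/
def mult (N : ℕ) (p : ℕ → ℕ) (k : ℕ) : ℕ :=
  ((Finset.range N).filter (fun i => p i = k)).card

/-- Multiplicity of the value `k` among the entries of a tuple of naturals. -/
def multN {n : ℕ} (v : Fin n → ℕ) (k : ℕ) : ℕ :=
  (Finset.univ.filter (fun i => v i = k)).card

/-- Euclidean norm of a tuple of naturals. -/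
noncomputable def enormN {n : ℕ} (v : Fin n → ℕ) : ℝ :=
  Real.sqrt (∑ i, ((v i : ℝ)) ^ 2)

/-- `IsPStar n p μ₀ μ` says that `p ∈ 𝒫*(2n)` with decomposition data `(μ₀; μ₁, μ₂, …)`:
`p` is a partition of `2n` whose multiset of parts is the union of the doubled partition
`[μ₁, μ₁, μ₂, μ₂, …]` and a single even part `2μ₀` (omitted if `μ₀ = 0`).  Equivalently,
for each `k ≥ 1` the multiplicity of `k` in `p` equals twice its multiplicity in `μ`, plus
one if `k = 2μ₀`. -/
def IsPStar (n : ℕ) (p : ℕ → ℕ) (μ₀ : ℕ) (μ : ℕ → ℕ) : Prop :=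
  IsPartition (2 * n) p ∧ Antitone μ ∧ (∀ i, n ≤ i → μ i = 0) ∧
  ∀ k, 1 ≤ k → mult (2 * n) p k = 2 * mult n μ k + (if k = 2 * μ₀ then 1 else 0)

/-- The transpose of a partition (with parts supported on `{0, …, N-1}`):
`(pᵗ)_j = #{i : p_i ≥ j+1}` (0-indexed). -/
def transposeP (N : ℕ) (p : ℕ → ℕ) (j : ℕ) : ℕ :=
  ((Finset.range N).filter (fun i => j + 1 ≤ p i)).card

/-- A partition (of `N`, with parts supported on `{0, …, N-1}`) is of type `C` if every odd
part occurs with even multiplicity. -/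
def TypeC (N : ℕ) (p : ℕ → ℕ) : Prop :=
  ∀ k, Odd k → Even (mult N p k)

/-- `IsCCollapse N p r` says that `r = p_C` is the C-collapse of `p`: the greatest element,
in the dominance order, of the set of type `C` partitions of `N` that are `≤ p`. -/
def IsCCollapse (N : ℕ) (p r : ℕ → ℕ) : Prop :=
  IsPartition N r ∧ TypeC N r ∧ Dominates p r ∧
    ∀ r', IsPartition N r' → TypeC N r' → Dominates p r' → Dominates r r'

/-! The transpose `q` of `p ∈ 𝒫**(2n)` with data `(μ₀; μ)` is `2μᵗ` plus one box in each of the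
first `2μ₀` columns, so its nonzero columns are the odd numbers `2(μᵗ)ⱼ + 1`, `j < 2μ₀`. Pairing
them as `(2i, 2i + 1)` and replacing each unequal pair `(x, y)` by `(x - 1, y + 1)` gives a type
`C` partition `R ≤ q` whose partial sums fall short of those of `q` by at most one, and only at
odd `t < 2μ₀`. As `q_C` dominates `R`, the hypothesis yields `Σ_{<t} q ≤ Σ_{<t} q' + 1` at such
`t` and `Σ_{<t} q ≤ Σ_{<t} q'` elsewhere; a parity argument removes the defect, so `q ≤ q'`,
and transposition reverses dominance. -/

theorem Finset.sum_range_two_mul {M : Type*} [AddCommMonoid M] (f : ℕ → M) (N : ℕ) :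
    ∑ i ∈ range (2 * N), f i = ∑ i ∈ range N, (f (2 * i) + f (2 * i + 1)) := by
  induction N with
  | zero => simp
  | succ N ih =>
    rw [show 2 * (N + 1) = 2 * N + 1 + 1 by ring, sum_range_succ, sum_range_succ, ih,
      sum_range_succ, add_assoc]

theorem even_card_filter_range_two_mul (N : ℕ) (Q : ℕ → Prop) [DecidablePred Q]
    (hQ : ∀ i, Q (2 * i) ↔ Q (2 * i + 1)) : Even #{i ∈ range (2 * N) | Q i} := by
  rw [card_filter, sum_range_two_mul]
  refine even_sum _ fun i _ => ?_
  simp only [hQ i]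
  exact ⟨_, rfl⟩

theorem sum_comp_eq_sum_mult (N K : ℕ) (v : ℕ → ℕ) (hv : ∀ i < N, v i < K) (F : ℕ → ℕ) :
    ∑ i ∈ range N, F (v i) = ∑ k ∈ range K, mult N v k * F k := by
  rw [← sum_fiberwise_of_maps_to (g := v) (t := range K) fun i hi =>
    mem_range.2 (hv i (mem_range.1 hi))]
  refine sum_congr rfl fun k _ => ?_
  rw [mult, ← smul_eq_mul, ← sum_const]
  exact sum_congr rfl fun i hi => by rw [(mem_filter.1 hi).2]

theorem IsPartition.le {N : ℕ} {p : ℕ → ℕ} (hp : IsPartition N p) (i : ℕ) : p i ≤ N := by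
  rcases lt_or_ge i N with hi | hi
  · rw [← hp.2.2]
    exact single_le_sum (fun j _ => Nat.zero_le (p j)) (mem_range.2 hi)
  · rw [hp.2.1 i hi]
    exact Nat.zero_le N

theorem IsPartition.sum_range_of_le {N : ℕ} {p : ℕ → ℕ} (hp : IsPartition N p) {k : ℕ}
    (hk : N ≤ k) : ∑ i ∈ range k, p i = N := by
  rw [← hp.2.2]
  refine (sum_subset (range_subset_range.2 hk) fun i _ hi => hp.2.1 i ?_).symm
  simpa using hi

theorem transposeP_eq_sum (N : ℕ) (v : ℕ → ℕ) (j : ℕ) :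
    transposeP N v j = ∑ i ∈ range N, if j + 1 ≤ v i then 1 else 0 := by
  rw [transposeP, card_filter]

theorem sum_range_transposeP (N t : ℕ) (v : ℕ → ℕ) :
    ∑ j ∈ range t, transposeP N v j = ∑ i ∈ range N, min (v i) t := by
  simp only [transposeP_eq_sum]
  rw [sum_comm]
  refine sum_congr rfl fun i _ => ?_
  rw [← card_filter, ← card_range (min (v i) t)]
  congr 1
  ext x
  simp only [mem_filter, mem_range]
  omega

theorem transposeP_antitone (N : ℕ) (v : ℕ → ℕ) : Antitone (transposeP N v) :=
  fun _ _ hxy => card_le_card <| monotone_filter_right _ fun _ _ h => by omega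

theorem transposeP_eq_zero {N : ℕ} {v : ℕ → ℕ} (hv : Antitone v) {j : ℕ} (hj : v 0 ≤ j) :
    transposeP N v j = 0 := by
  rw [transposeP, card_eq_zero, filter_eq_empty_iff]
  intro i _
  have := hv (Nat.zero_le i)
  omega

theorem isPartition_transposeP {N : ℕ} {p : ℕ → ℕ} (hp : IsPartition N p) :
    IsPartition N (transposeP N p) := by
  refine ⟨transposeP_antitone N p, fun j hj => ?_, ?_⟩
  · rw [transposeP, card_eq_zero, filter_eq_empty_iff]
    intro i _
    have := hp.le i
    omega
  · rw [sum_range_transposeP]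
    conv_rhs => rw [← hp.2.2]
    exact sum_congr rfl fun i _ => min_eq_left (hp.le i)

theorem sum_range_le_mul_add_sum_tsub (x : ℕ → ℕ) {k N : ℕ} (hk : k ≤ N) (c : ℕ) :
    ∑ i ∈ range k, x i ≤ k * c + ∑ i ∈ range N, (x i - c) :=
  calc ∑ i ∈ range k, x i ≤ ∑ i ∈ range k, (c + (x i - c)) :=
        sum_le_sum fun i _ => le_add_tsub
    _ = k * c + ∑ i ∈ range k, (x i - c) := by
        rw [sum_add_distrib, sum_const, card_range, smul_eq_mul]
    _ ≤ k * c + ∑ i ∈ range N, (x i - c) :=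
        Nat.add_le_add_left (sum_le_sum_of_subset (range_subset_range.2 hk)) _

theorem IsPartition.sum_range_eq_mul_add_sum_tsub {N : ℕ} {p : ℕ → ℕ} (hp : IsPartition N p)
    {k : ℕ} (hk : k ≤ N) : ∑ i ∈ range k, p i = k * p k + ∑ i ∈ range N, (p i - p k) := by
  have htail : ∑ i ∈ range N, (p i - p k) = ∑ i ∈ range k, (p i - p k) := by
    refine (sum_subset (range_subset_range.2 hk) fun i _ hi => ?_).symm
    have := hp.1 (show k ≤ i by simpa using hi)
    omega
  rw [htail, show k * p k = ∑ _i ∈ range k, p k by simp, ← sum_add_distrib]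
  exact sum_congr rfl fun i hi => (add_tsub_cancel_of_le (hp.1 (mem_range.1 hi).le)).symm

theorem IsPartition.sum_tsub_add_sum_transposeP {N : ℕ} {p : ℕ → ℕ} (hp : IsPartition N p)
    (c : ℕ) : ∑ i ∈ range N, (p i - c) + ∑ j ∈ range c, transposeP N p j = N := by
  rw [sum_range_transposeP, ← sum_add_distrib]
  conv_rhs => rw [← hp.2.2]
  exact sum_congr rfl fun i _ => tsub_add_min

theorem IsPartition.dominates_of_dominates_transposeP {N : ℕ} {p p' : ℕ → ℕ}
    (hp : IsPartition N p) (hp' : IsPartition N p')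
    (h : Dominates (transposeP N p') (transposeP N p)) : Dominates p p' := by
  intro k
  rcases le_or_gt k N with hk | hk
  · calc ∑ i ∈ range k, p' i ≤ k * p k + ∑ i ∈ range N, (p' i - p k) :=
          sum_range_le_mul_add_sum_tsub p' hk _
      _ ≤ k * p k + ∑ i ∈ range N, (p i - p k) := by
          have := hp.sum_tsub_add_sum_transposeP (p k)
          have := hp'.sum_tsub_add_sum_transposeP (p k)
          have := h (p k)
          omega
      _ = ∑ i ∈ range k, p i := (hp.sum_range_eq_mul_add_sum_tsub hk).symm
  · rw [hp.sum_range_of_le hk.le, hp'.sum_range_of_le hk.le]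

section PStar

/-- `(pᵗ)_j = 2 (μᵗ)_j + [j < 2μ₀]` for `p ∈ 𝒫**(2n)` with data `(μ₀; μ)`, written with
`a = μᵗ` and `m = μ₀`. -/
def pstarTranspose (a : ℕ → ℕ) (m j : ℕ) : ℕ :=
  2 * a j + if j < 2 * m then 1 else 0

theorem sum_range_pstarTranspose (a : ℕ → ℕ) (m t : ℕ) :
    ∑ j ∈ range t, pstarTranspose a m j = 2 * ∑ j ∈ range t, a j + min t (2 * m) := by
  simp only [pstarTranspose]
  rw [sum_add_distrib, ← mul_sum, ← card_filter, ← card_range (min t (2 * m))]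
  congr 2
  ext j
  simp only [mem_filter, mem_range]
  omega

variable {n : ℕ} {p : ℕ → ℕ} {μ₀ : ℕ} {μ : ℕ → ℕ}

theorem IsPStar.le (hp : IsPStar n p μ₀ μ) : μ₀ ≤ n := by
  rcases Nat.eq_zero_or_pos μ₀ with h | h
  · omega
  · have hpos : 0 < mult (2 * n) p (2 * μ₀) := by
      rw [hp.2.2.2 _ (by omega), if_pos rfl]
      omega
    obtain ⟨i, hi⟩ := card_pos.1 hpos
    have := hp.1.le i
    have := (mem_filter.1 hi).2
    omega

theorem IsPStar.transposeP_eq_zero (hp : IsPStar n p μ₀ μ) (hpss : μ 0 ≤ 2 * μ₀) {j : ℕ}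
    (hj : 2 * μ₀ ≤ j) : transposeP n μ j = 0 :=
  _root_.transposeP_eq_zero hp.2.1 (hpss.trans hj)

theorem IsPStar.transposeP_eq (hp : IsPStar n p μ₀ μ) (hpss : μ 0 ≤ 2 * μ₀) :
    transposeP (2 * n) p = pstarTranspose (transposeP n μ) μ₀ := by
  have hμ₀ := hp.le
  obtain ⟨hpart, hμ, -, hmult⟩ := hp
  funext j
  let F : ℕ → ℕ := fun k => if j + 1 ≤ k then 1 else 0
  have hp_lt : ∀ i < 2 * n, p i < 2 * n + 1 := fun i _ => Nat.lt_succ_of_le (hpart.le i)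
  have hμ_lt : ∀ i < n, μ i < 2 * n + 1 := fun i _ => by
    have := hμ (Nat.zero_le i)
    omega
  have hsplit : ∀ k ∈ range (2 * n + 1),
      mult (2 * n) p k * F k = 2 * (mult n μ k * F k) + if k = 2 * μ₀ then F k else 0 := by
    intro k _
    rcases Nat.eq_zero_or_pos k with rfl | hk
    · simp [F]
    · rw [hmult k hk]
      split_ifs <;> ring
  rw [pstarTranspose, transposeP_eq_sum, transposeP_eq_sum,
    sum_comp_eq_sum_mult _ _ p hp_lt F, sum_comp_eq_sum_mult _ _ μ hμ_lt F,
    sum_congr rfl hsplit, sum_add_distrib, ← mul_sum, sum_ite_eq',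
    if_pos (mem_range.2 (by omega))]
  simp only [F, Nat.add_one_le_iff]

end PStar

section PairCollapse

def pairCollapse (a : ℕ → ℕ) (m j : ℕ) : ℕ :=
  if 2 * m ≤ j then 0
  else if a (2 * (j / 2)) = a (2 * (j / 2) + 1) then 2 * a j + 1
  else if Even j then 2 * a j else 2 * a j + 2

variable {a : ℕ → ℕ} {m : ℕ}

theorem pairCollapse_of_le {j : ℕ} (hj : 2 * m ≤ j) : pairCollapse a m j = 0 := by
  rw [pairCollapse, if_pos hj]

theorem pairCollapse_two_mul {i : ℕ} (hi : i < m) :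
    pairCollapse a m (2 * i) = if a (2 * i) = a (2 * i + 1) then 2 * a (2 * i) + 1
      else 2 * a (2 * i) := by
  simp [pairCollapse, show ¬ 2 * m ≤ 2 * i by omega]

theorem pairCollapse_two_mul_add_one {i : ℕ} (hi : i < m) :
    pairCollapse a m (2 * i + 1) = if a (2 * i) = a (2 * i + 1) then 2 * a (2 * i + 1) + 1
      else 2 * a (2 * i + 1) + 2 := by
  simp [pairCollapse, show ¬ 2 * m ≤ 2 * i + 1 by omega, show (2 * i + 1) / 2 = i by omega]

theorem pairCollapse_antitone (ha : Antitone a) : Antitone (pairCollapse a m) := by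
  refine antitone_nat_of_succ_le fun j => ?_
  rcases lt_or_ge (j + 1) (2 * m) with hj | hj
  · obtain ⟨i, rfl | rfl⟩ := Nat.even_or_odd' j
    · have : a (2 * i + 1) ≤ a (2 * i) := ha (by omega)
      rw [pairCollapse_two_mul (by omega), pairCollapse_two_mul_add_one (by omega)]
      split_ifs <;> omega
    · have h₁ : a (2 * (i + 1)) ≤ a (2 * i + 1) := ha (by omega)
      have h₂ : a (2 * (i + 1) + 1) ≤ a (2 * (i + 1)) := ha (by omega)
      have h₃ : a (2 * i + 1) ≤ a (2 * i) := ha (by omega)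
      rw [show 2 * i + 1 + 1 = 2 * (i + 1) by ring, pairCollapse_two_mul (by omega),
        pairCollapse_two_mul_add_one (by omega)]
      split_ifs <;> omega
  · rw [pairCollapse_of_le hj]
    exact Nat.zero_le _

theorem typeC_pairCollapse (N : ℕ) : TypeC (2 * N) (pairCollapse a m) := by
  rintro k ⟨l, rfl⟩
  refine even_card_filter_range_two_mul N _ fun i => ?_
  rcases lt_or_ge i m with hi | hi
  · rw [pairCollapse_two_mul hi, pairCollapse_two_mul_add_one hi]
    split_ifs <;> omega
  · rw [pairCollapse_of_le (by omega), pairCollapse_of_le (by omega)]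

theorem pairCollapse_add_pairCollapse (ha₀ : ∀ j, 2 * m ≤ j → a j = 0) (i : ℕ) :
    pairCollapse a m (2 * i) + pairCollapse a m (2 * i + 1) =
      pstarTranspose a m (2 * i) + pstarTranspose a m (2 * i + 1) := by
  simp only [pstarTranspose]
  rcases lt_or_ge i m with hi | hi
  · rw [pairCollapse_two_mul hi, pairCollapse_two_mul_add_one hi]
    split_ifs <;> omega
  · rw [pairCollapse_of_le (by omega), pairCollapse_of_le (by omega), ha₀ _ (by omega),
      ha₀ _ (by omega)]
    split_ifs <;> omega

theorem pairCollapse_two_mul_le (i : ℕ) :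
    pairCollapse a m (2 * i) ≤ pstarTranspose a m (2 * i) := by
  simp only [pstarTranspose]
  rcases lt_or_ge i m with hi | hi
  · rw [pairCollapse_two_mul hi]
    split_ifs <;> omega
  · rw [pairCollapse_of_le (by omega)]
    exact Nat.zero_le _

theorem pstarTranspose_two_mul_le (ha₀ : ∀ j, 2 * m ≤ j → a j = 0) (i : ℕ) :
    pstarTranspose a m (2 * i) ≤ pairCollapse a m (2 * i) + if i < m then 1 else 0 := by
  simp only [pstarTranspose]
  rcases lt_or_ge i m with hi | hi
  · rw [pairCollapse_two_mul hi]
    split_ifs <;> omega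
  · rw [pairCollapse_of_le (by omega), ha₀ _ (by omega)]
    split_ifs <;> omega

theorem sum_range_two_mul_pairCollapse (ha₀ : ∀ j, 2 * m ≤ j → a j = 0) (i : ℕ) :
    ∑ j ∈ range (2 * i), pairCollapse a m j = ∑ j ∈ range (2 * i), pstarTranspose a m j := by
  rw [sum_range_two_mul, sum_range_two_mul]
  exact sum_congr rfl fun k _ => pairCollapse_add_pairCollapse ha₀ k

theorem dominates_pairCollapse (ha₀ : ∀ j, 2 * m ≤ j → a j = 0) :
    Dominates (pstarTranspose a m) (pairCollapse a m) := by
  intro t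
  obtain ⟨i, rfl | rfl⟩ := Nat.even_or_odd' t
  · exact (sum_range_two_mul_pairCollapse ha₀ i).le
  · rw [sum_range_succ, sum_range_succ, sum_range_two_mul_pairCollapse ha₀]
    exact Nat.add_le_add_left (pairCollapse_two_mul_le i) _

theorem sum_range_pstarTranspose_le (ha₀ : ∀ j, 2 * m ≤ j → a j = 0) (t : ℕ) :
    ∑ j ∈ range t, pstarTranspose a m j ≤
      ∑ j ∈ range t, pairCollapse a m j + if t % 2 = 1 ∧ t < 2 * m then 1 else 0 := by
  obtain ⟨i, rfl | rfl⟩ := Nat.even_or_odd' t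
  · rw [sum_range_two_mul_pairCollapse ha₀]
    exact Nat.le_add_right _ _
  · rw [sum_range_succ, sum_range_succ, sum_range_two_mul_pairCollapse ha₀]
    have := pstarTranspose_two_mul_le ha₀ i
    split_ifs at this ⊢ <;> omega

theorem isPartition_pairCollapse {N : ℕ} (ha : Antitone a) (ha₀ : ∀ j, 2 * m ≤ j → a j = 0)
    (hq : IsPartition (2 * N) (pstarTranspose a m)) : IsPartition (2 * N) (pairCollapse a m) := by
  refine ⟨pairCollapse_antitone ha, fun j hj => pairCollapse_of_le ?_, ?_⟩
  · have := hq.2.1 j hj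
    simp only [pstarTranspose] at this
    split_ifs at this
    omega
  · rw [sum_range_two_mul_pairCollapse ha₀, hq.2.2]

end PairCollapse

/-- A defect of one box in an odd partial sum `t < 2m` is ruled out by parity: it forces
`2m' < t`, and then the next (even) partial sum exceeds the other by at least two. -/
theorem dominates_pstarTranspose_of_le_add {a a' : ℕ → ℕ} {m m' : ℕ}
    (ha'₀ : ∀ j, 2 * m' ≤ j → a' j = 0)
    (h : ∀ t, ∑ j ∈ range t, pstarTranspose a m j ≤
      ∑ j ∈ range t, pstarTranspose a' m' j + if t % 2 = 1 ∧ t < 2 * m then 1 else 0) :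
    Dominates (pstarTranspose a' m') (pstarTranspose a m) := by
  intro t
  by_contra! hlt
  have ht := h t
  split_ifs at ht with hodd
  · have hpar := sum_range_pstarTranspose a m t
    have hpar' := sum_range_pstarTranspose a' m' t
    have hm' : 2 * m' ≤ t := by omega
    have hqt : pstarTranspose a m t = 2 * a t + 1 := by simp [pstarTranspose, hodd.2]
    have hq't : pstarTranspose a' m' t = 0 := by
      simp [pstarTranspose, ha'₀ t hm', show ¬ t < 2 * m' by omega]
    have hnext := h (t + 1)
    rw [sum_range_succ, sum_range_succ, hqt, hq't] at hnext
    split_ifs at hnext <;> omega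
  · omega

theorem statement10_general (n : ℕ)
    (p p' : ℕ → ℕ) (μ₀ μ₀' : ℕ) (μ μ' : ℕ → ℕ)
    (hp : IsPStar n p μ₀ μ) (hpss : μ 0 ≤ 2 * μ₀)
    (hp' : IsPStar n p' μ₀' μ') (hpss' : μ' 0 ≤ 2 * μ₀')
    (r r' : ℕ → ℕ)
    (hr : IsCCollapse (2 * n) (transposeP (2 * n) p) r)
    (hr' : IsCCollapse (2 * n) (transposeP (2 * n) p') r')
    (hdom : Dominates r' r) :
    Dominates p p' := by
  have hq := hp.transposeP_eq hpss
  have hq' := hp'.transposeP_eq hpss'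
  have ha₀ : ∀ j, 2 * μ₀ ≤ j → transposeP n μ j = 0 := fun _ => hp.transposeP_eq_zero hpss
  have hrR : Dominates r (pairCollapse (transposeP n μ) μ₀) := by
    refine hr.2.2.2 _ ?_ (typeC_pairCollapse n) (hq ▸ dominates_pairCollapse ha₀)
    exact isPartition_pairCollapse (transposeP_antitone n μ) ha₀
      (hq ▸ isPartition_transposeP hp.1)
  refine hp.1.dominates_of_dominates_transposeP hp'.1 ?_
  rw [hq, hq']
  refine dominates_pstarTranspose_of_le_add (fun _ => hp'.transposeP_eq_zero hpss') fun t => ?_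
  calc _ ≤ _ := sum_range_pstarTranspose_le ha₀ t
    _ ≤ ∑ j ∈ range t, r' j + _ := Nat.add_le_add_right ((hrR t).trans (hdom t)) _
    _ ≤ _ := Nat.add_le_add_right (hq' ▸ hr'.2.2.1 t) _

/-- Let `p, p′ ∈ 𝒫**(2n)`.  If `(pᵗ)_C ≤ ((p′)ᵗ)_C` in the dominance
order, then `p′ ≤ p` in the dominance order. -/
theorem statement10 (n : ℕ) (hn : 1 ≤ n)
    (p p' : ℕ → ℕ) (μ₀ μ₀' : ℕ) (μ μ' : ℕ → ℕ)
    (hp : IsPStar n p μ₀ μ) (hpss : μ 0 ≤ 2 * μ₀)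
    (hp' : IsPStar n p' μ₀' μ') (hpss' : μ' 0 ≤ 2 * μ₀')
    (r r' : ℕ → ℕ)
    (hr : IsCCollapse (2 * n) (transposeP (2 * n) p) r)
    (hr' : IsCCollapse (2 * n) (transposeP (2 * n) p') r')
    (hdom : Dominates r' r) :
    Dominates p p' :=
  statement10_general n p p' μ₀ μ₀' μ μ' hp hpss hp' hpss' r r' hr hr' hdom
end

section
/- For every ε ∈ (−1/2, 1/2) and every v ∈ (ε+ℤ)ⁿ₊, one has |v_ε(p_ε(v))| ≤ |v|; that is, among weakly decreasing n-tuples in ε+ℤ with a given multiset of multiplicities, the ε-triangular arrangement has minimal Euclidean norm. -/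
open Finset

/-- Multiplicity of the real value `s` among the entries of the tuple `v`. -/
noncomputable def multR {n : ℕ} (v : Fin n → ℝ) (s : ℝ) : ℕ :=
  {i : Fin n | v i = s}.ncard

/-- Euclidean norm of a real tuple. -/
noncomputable def enormR {n : ℕ} (v : Fin n → ℝ) : ℝ :=
  Real.sqrt (∑ i, (v i) ^ 2)

/-- `IsVEps n ε p w` says that the weakly decreasing tuple `w : Fin n → ℝ` is `v_ε(p)`:
its entries lie in `ε + ℤ`, `ε` occurs with multiplicity `p 0 = μ₀`, and for `k ≥ 1`
(writing the parts of `p` as `[μ₀, μ₁, μ₁', μ₂, μ₂', …]`, so `μ_k = p (2k-1)` and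
`μ_k' = p (2k)`), if `ε ≥ 0` then `ε - k` occurs `μ_k` times and `ε + k` occurs `μ_k'`
times, while if `ε < 0` then `ε + k` occurs `μ_k` times and `ε - k` occurs `μ_k'` times. -/
def IsVEps (n : ℕ) (ε : ℝ) (p : ℕ → ℕ) (w : Fin n → ℝ) : Prop :=
  Antitone w ∧ (∀ i, ∃ k : ℤ, w i = ε + (k : ℝ)) ∧
  multR w ε = p 0 ∧
  ∀ k : ℕ, 1 ≤ k →
    ((0 ≤ ε → multR w (ε - (k : ℝ)) = p (2 * k - 1) ∧ multR w (ε + (k : ℝ)) = p (2 * k)) ∧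
     (ε < 0 → multR w (ε + (k : ℝ)) = p (2 * k - 1) ∧ multR w (ε - (k : ℝ)) = p (2 * k)))

/-- `IsPEps n ε v q` says that the partition `q` of `n` is `p_ε(v)`: the weakly decreasing
rearrangement of the multiplicity sequence `[m_v(ε), m_v(ε-1), m_v(ε+1), …]`, i.e. for each
positive value `c`, the number of parts of `q` equal to `c` is the number of `k : ℤ` with
`m_v(ε + k) = c`. -/
def IsPEps (n : ℕ) (ε : ℝ) (v : Fin n → ℝ) (q : ℕ → ℕ) : Prop :=
  IsPartition n q ∧
  ∀ c : ℕ, 1 ≤ c → mult n q c = {k : ℤ | multR v (ε + (k : ℝ)) = c}.ncard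

/-!
List `ε + ℤ` as `x₀, x₁, x₂, … = ε, ε ∓ 1, ε ± 1, ε ∓ 2, …`; since `|ε| < 1/2`, the squares `x_j²`
increase with `j`. Grouping the entries of a tuple by value, `|v|² = ∑ m_j x_j²` where `m_j` is
the multiplicity of `x_j` in `v`, and `|v_ε(p_ε(v))|² = ∑ q_j x_j²` where `q` is the decreasing
rearrangement of `m`. Writing each multiplicity as `∑_{t ≥ 1} [t ≤ m_j]`, it suffices to compare,
for each `t`, the sums of `x_j²` over `{j | t ≤ q_j}` and `{j | t ≤ m_j}`: these sets have the
same size, and the first is an initial segment of `ℕ`, which minimises any monotone sum.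
-/

open Function

theorem sum_nsmul_eq_sum_sum_filter_le {ι R : Type*} [AddCommMonoid R] (s : Finset ι)
    (a : ι → ℕ) (c : ι → R) {C : ℕ} (haC : ∀ j ∈ s, a j ≤ C) :
    ∑ j ∈ s, a j • c j = ∑ t ∈ Icc 1 C, ∑ j ∈ s with t ≤ a j, c j := by
  simp_rw [sum_filter]
  rw [sum_comm]
  refine sum_congr rfl fun j hj => ?_
  rw [← sum_filter, sum_const]
  have hlevels : {t ∈ Icc 1 C | t ≤ a j} = Icc 1 (a j) := by
    ext t
    simp only [mem_filter, mem_Icc]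
    have := haC j hj
    omega
  simp [hlevels]

theorem card_filter_le_eq_sum_card_filter_eq {ι : Type*} (s : Finset ι) (a : ι → ℕ) {C t : ℕ}
    (haC : ∀ j ∈ s, a j ≤ C) :
    #{j ∈ s | t ≤ a j} = ∑ c ∈ Icc t C, #{j ∈ s | a j = c} := by
  rw [card_eq_sum_card_fiberwise (f := a) (t := Icc t C)]
  · refine sum_congr rfl fun c hc => congrArg card ?_
    ext j
    simp only [mem_filter]
    constructor
    · rintro ⟨⟨hj, -⟩, rfl⟩
      exact ⟨hj, rfl⟩
    · rintro ⟨hj, rfl⟩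
      exact ⟨⟨hj, (mem_Icc.1 hc).1⟩, rfl⟩
  · intro j hj
    rw [coe_filter] at hj
    exact mem_Icc.2 ⟨hj.2, haC j hj.1⟩

theorem card_filter_le_eq_of_card_filter_eq {ι : Type*} (s : Finset ι) {a b : ι → ℕ}
    (hab : ∀ c, 1 ≤ c → #{j ∈ s | a j = c} = #{j ∈ s | b j = c}) {t : ℕ} (ht : 1 ≤ t) :
    #{j ∈ s | t ≤ a j} = #{j ∈ s | t ≤ b j} := by
  rw [card_filter_le_eq_sum_card_filter_eq s a fun j hj => le_sup_of_le_left (le_sup hj),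
    card_filter_le_eq_sum_card_filter_eq s b fun j hj => le_sup_of_le_right (le_sup hj)]
  exact sum_congr rfl fun c hc => hab c (ht.trans (mem_Icc.1 hc).1)

theorem exists_forall_exists_lt_of_finite {ι α : Type*} [Finite ι] {u : ι → α} {g : ℕ → α}
    (h : ∀ i, ∃ j, u i = g j) (N : ℕ) : ∃ M, N ≤ M ∧ ∀ i, ∃ j < M, u i = g j := by
  choose idx hidx using h
  obtain ⟨M, hM⟩ := Finite.exists_le idx
  exact ⟨max N (M + 1), le_max_left _ _,
    fun i => ⟨idx i, (Nat.lt_succ_of_le (hM i)).trans_le (le_max_right _ _), hidx i⟩⟩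

theorem eq_range_card_of_forall_le_mem {s : Finset ℕ} (hs : ∀ a ∈ s, ∀ b ≤ a, b ∈ s) :
    s = range #s := by
  refine eq_of_subset_of_card_le (fun a ha => mem_range.2 ?_) (by simp)
  have : range (a + 1) ⊆ s := fun b hb => hs a ha b (Nat.lt_succ_iff.1 (mem_range.1 hb))
  simpa using card_le_card this

section Rearrangement

variable {R : Type*} [AddCommMonoid R] [PartialOrder R] [IsOrderedAddMonoid R]

theorem sum_range_card_le_sum_of_monotone {c : ℕ → R} (hc : Monotone c) (s : Finset ℕ) :
    ∑ j ∈ range #s, c j ≤ ∑ j ∈ s, c j := by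
  induction s using Finset.induction_on_max with
  | empty => simp
  | insert a s has ih =>
    have ha : a ∉ s := fun h => (has a h).false
    have hcard : #s ≤ a := by simpa using card_le_card (fun x hx => mem_range.2 (has x hx))
    rw [card_insert_of_notMem ha, sum_range_succ, sum_insert ha, add_comm]
    exact add_le_add (hc hcard) ih

theorem sum_nsmul_le_sum_nsmul_of_antitone {a b : ℕ → ℕ} {c : ℕ → R} (M : ℕ)
    (ha : Antitone a) (hc : Monotone c)
    (hab : ∀ k, 1 ≤ k → #{j ∈ range M | a j = k} = #{j ∈ range M | b j = k}) :
    ∑ j ∈ range M, a j • c j ≤ ∑ j ∈ range M, b j • c j := by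
  set C := (range M).sup a ⊔ (range M).sup b
  have haC : ∀ j ∈ range M, a j ≤ C := fun j hj => le_sup_of_le_left (le_sup hj)
  have hbC : ∀ j ∈ range M, b j ≤ C := fun j hj => le_sup_of_le_right (le_sup hj)
  rw [sum_nsmul_eq_sum_sum_filter_le _ a c haC, sum_nsmul_eq_sum_sum_filter_le _ b c hbC]
  refine sum_le_sum fun t ht => ?_
  have hlower : ∀ x ∈ {j ∈ range M | t ≤ a j}, ∀ y ≤ x, y ∈ {j ∈ range M | t ≤ a j} := by
    intro x hx y hyx
    simp only [mem_filter, mem_range] at hx ⊢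
    exact ⟨by omega, hx.2.trans (ha hyx)⟩
  rw [eq_range_card_of_forall_le_mem hlower,
    card_filter_le_eq_of_card_filter_eq _ hab (mem_Icc.1 ht).1]
  exact sum_range_card_le_sum_of_monotone hc _

end Rearrangement

section Multiplicity

variable {n : ℕ}

theorem multR_eq_card (u : Fin n → ℝ) (s : ℝ) : multR u s = #{i | u i = s} := by
  rw [multR, ← Set.ncard_coe_finset]
  simp

theorem multR_ne_zero {u : Fin n → ℝ} {i : Fin n} {s : ℝ} (h : u i = s) : multR u s ≠ 0 :=
  Set.ncard_ne_zero_of_mem (s := {i | u i = s}) h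

theorem lt_of_multR_ne_zero {u : Fin n → ℝ} {g : ℕ → ℝ} (hg : Injective g) {M j : ℕ}
    (hu : ∀ i, ∃ k < M, u i = g k) (h : multR u (g j) ≠ 0) : j < M := by
  obtain ⟨i, hi⟩ := Set.nonempty_of_ncard_ne_zero h
  obtain ⟨k, hk, hik⟩ := hu i
  rwa [← hg (hik.symm.trans hi)]

theorem sum_comp_eq_sum_range_multR_nsmul {R : Type*} [AddCommMonoid R] (u : Fin n → ℝ)
    (F : ℝ → R) {g : ℕ → ℝ} (hg : Injective g) {M : ℕ} (hu : ∀ i, ∃ j < M, u i = g j) :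
    ∑ i, F (u i) = ∑ j ∈ range M, multR u (g j) • F (g j) := by
  classical
  have hmaps : ∀ i ∈ (univ : Finset (Fin n)), u i ∈ (range M).image g := fun i _ => by
    obtain ⟨j, hj, hij⟩ := hu i
    exact mem_image.2 ⟨j, mem_range.2 hj, hij.symm⟩
  rw [← sum_fiberwise_of_maps_to hmaps, sum_image hg.injOn]
  refine sum_congr rfl fun j _ => ?_
  rw [sum_congr rfl fun i hi => by rw [(mem_filter.1 hi).2], sum_const, multR_eq_card]

end Multiplicity

theorem injective_const_add_equiv_cast (ε : ℝ) (e : ℕ ≃ ℤ) :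
    Injective fun j => ε + (e j : ℝ) := fun i j h =>
  e.injective (by exact_mod_cast add_left_cancel h)

/-- `ε + triangularEnum ε j` runs through `ε + ℤ` as `ε, ε ∓ 1, ε ± 1, ε ∓ 2, …` (upper signs for
`ε ≥ 0`), the order in which `v_ε` reads the parts `[μ₀, μ₁, μ₁', μ₂, …]`. -/
noncomputable def triangularEnum (ε : ℝ) : ℕ ≃ ℤ :=
  if 0 ≤ ε then Equiv.intEquivNat.symm else Equiv.intEquivNat.symm.trans (Equiv.neg ℤ)

theorem intEquivNat_symm_two_mul (k : ℕ) : Equiv.intEquivNat.symm (2 * k) = k := by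
  rw [Equiv.symm_apply_eq]; rfl

theorem intEquivNat_symm_two_mul_add_one (k : ℕ) :
    Equiv.intEquivNat.symm (2 * k + 1) = -(k + 1 : ℤ) := by
  rw [Equiv.symm_apply_eq, Equiv.intEquivNat, Equiv.trans_apply, ← Int.negSucc_eq]; rfl

theorem triangularEnum_of_nonneg {ε : ℝ} (h : 0 ≤ ε) (j : ℕ) :
    triangularEnum ε j = Equiv.intEquivNat.symm j := by
  simp [triangularEnum, h]

theorem triangularEnum_of_neg {ε : ℝ} (h : ε < 0) (j : ℕ) :
    triangularEnum ε j = -Equiv.intEquivNat.symm j := by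
  simp [triangularEnum, not_le.2 h]

theorem triangularEnum_zero (ε : ℝ) : triangularEnum ε 0 = 0 := by
  rcases le_or_gt 0 ε with h | h
  · simpa [triangularEnum_of_nonneg h] using intEquivNat_symm_two_mul 0
  · simpa [triangularEnum_of_neg h] using intEquivNat_symm_two_mul 0

theorem monotone_sq_add_intEquivNat_symm {δ : ℝ} (h₀ : 0 ≤ δ) (h₁ : δ ≤ 1 / 2) :
    Monotone fun j => (δ + Equiv.intEquivNat.symm j : ℝ) ^ 2 := by
  refine monotone_nat_of_le_succ fun j => ?_
  obtain ⟨k, rfl | rfl⟩ := Nat.even_or_odd' j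
  · rw [intEquivNat_symm_two_mul, intEquivNat_symm_two_mul_add_one]
    push_cast
    nlinarith [mul_nonneg (by linarith : (0 : ℝ) ≤ 1 - 2 * δ) (k.cast_nonneg : (0 : ℝ) ≤ k)]
  · rw [show 2 * k + 1 + 1 = 2 * (k + 1) by ring, intEquivNat_symm_two_mul,
      intEquivNat_symm_two_mul_add_one]
    push_cast
    nlinarith [mul_nonneg h₀ (k.cast_nonneg : (0 : ℝ) ≤ k)]

theorem monotone_sq_add_triangularEnum {ε : ℝ} (h : |ε| ≤ 1 / 2) :
    Monotone fun j => (ε + triangularEnum ε j : ℝ) ^ 2 := by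
  have hsq : ∀ j, (ε + triangularEnum ε j : ℝ) ^ 2 = (|ε| + Equiv.intEquivNat.symm j) ^ 2 := by
    intro j
    rcases le_or_gt 0 ε with hε | hε
    · rw [triangularEnum_of_nonneg hε, abs_of_nonneg hε]
    · rw [triangularEnum_of_neg hε, abs_of_neg hε]
      push_cast
      ring
  simpa only [hsq] using monotone_sq_add_intEquivNat_symm (abs_nonneg ε) h

theorem exists_triangularEnum_eq {ε x : ℝ} (h : ∃ k : ℤ, x = ε + k) :
    ∃ j, x = ε + triangularEnum ε j :=
  let ⟨k, hk⟩ := h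
  ⟨(triangularEnum ε).symm k, by simp [hk]⟩

theorem IsVEps.multR_add_triangularEnum {n : ℕ} {ε : ℝ} {p : ℕ → ℕ} {w : Fin n → ℝ}
    (hw : IsVEps n ε p w) (j : ℕ) : multR w (ε + triangularEnum ε j) = p j := by
  obtain ⟨-, -, h0, hk⟩ := hw
  obtain ⟨k, rfl | rfl⟩ := Nat.even_or_odd' j
  · rcases Nat.eq_zero_or_pos k with rfl | hk0
    · simpa [triangularEnum_zero] using h0
    rcases le_or_gt 0 ε with hε | hε
    · simpa [triangularEnum_of_nonneg hε, intEquivNat_symm_two_mul] using ((hk k hk0).1 hε).2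
    · simpa [triangularEnum_of_neg hε, intEquivNat_symm_two_mul, sub_eq_add_neg]
        using ((hk k hk0).2 hε).2
  · have h := hk (k + 1) k.succ_pos
    rw [show 2 * (k + 1) - 1 = 2 * k + 1 by omega] at h
    rcases le_or_gt 0 ε with hε | hε
    · simpa [triangularEnum_of_nonneg hε, intEquivNat_symm_two_mul_add_one, sub_eq_add_neg]
        using (h.1 hε).1
    · simpa [triangularEnum_of_neg hε, intEquivNat_symm_two_mul_add_one] using (h.2 hε).1

theorem IsVEps.exists_lt_eq {n N : ℕ} {ε : ℝ} {p : ℕ → ℕ} {w : Fin n → ℝ}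
    (hw : IsVEps n ε p w) (hp : ∀ j, N ≤ j → p j = 0) (i : Fin n) :
    ∃ j < N, w i = ε + triangularEnum ε j := by
  obtain ⟨j, hj⟩ := exists_triangularEnum_eq (hw.2.1 i)
  refine ⟨j, not_le.1 fun hNj => multR_ne_zero hj ?_, hj⟩
  rw [hw.multR_add_triangularEnum j, hp j hNj]

theorem IsPEps.card_filter_eq {n M : ℕ} {ε : ℝ} {v : Fin n → ℝ} {q : ℕ → ℕ} (e : ℕ ≃ ℤ)
    (hq : IsPEps n ε v q) (hnM : n ≤ M) (hv : ∀ i, ∃ j < M, v i = ε + e j) {c : ℕ} (hc : 1 ≤ c) :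
    #{j ∈ range M | q j = c} = #{j ∈ range M | multR v (ε + e j) = c} := by
  obtain ⟨⟨-, hq0, -⟩, hmult⟩ := hq
  calc #{j ∈ range M | q j = c}
      = mult n q c := by
        unfold mult
        congr 1
        ext j
        simp only [mem_filter, mem_range]
        refine ⟨fun ⟨_, hj⟩ => ⟨?_, hj⟩, fun ⟨hj, hjc⟩ => ⟨hj.trans_le hnM, hjc⟩⟩
        by_contra hnj
        have := hq0 j (not_lt.1 hnj)
        omega
    _ = {k : ℤ | multR v (ε + k) = c}.ncard := hmult c hc
    _ = {j | multR v (ε + e j) = c}.ncard := by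
        rw [← Set.ncard_image_of_injective _ e.injective]
        exact congrArg _ (e.image_preimage {k : ℤ | multR v (ε + k) = c}).symm
    _ = #{j ∈ range M | multR v (ε + e j) = c} := by
        rw [← Set.ncard_coe_finset, coe_filter]
        congr 1
        ext j
        simp only [Set.mem_ofPred_eq, mem_range]
        refine ⟨fun hj => ⟨?_, hj⟩, And.right⟩
        exact lt_of_multR_ne_zero (injective_const_add_equiv_cast ε e) hv (by omega)

theorem statement11_general (n : ℕ) (ε : ℝ)
    (hε₁ : -(1 / 2 : ℝ) < ε) (hε₂ : ε < 1 / 2)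
    (v : Fin n → ℝ)
    (hvmem : ∀ i, ∃ k : ℤ, v i = ε + (k : ℝ))
    (q : ℕ → ℕ) (hq : IsPEps n ε v q)
    (w : Fin n → ℝ) (hw : IsVEps n ε q w) :
    enormR w ≤ enormR v := by
  set g : ℕ → ℝ := fun j => ε + triangularEnum ε j
  obtain ⟨M, hnM, hvM⟩ :=
    exists_forall_exists_lt_of_finite (g := g) (fun i => exists_triangularEnum_eq (hvmem i)) n
  have hwM : ∀ i, ∃ j < M, w i = g j := fun i =>
    let ⟨j, hj, hij⟩ := hw.exists_lt_eq hq.1.2.1 i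
    ⟨j, hj.trans_le hnM, hij⟩
  have hg := injective_const_add_equiv_cast ε (triangularEnum ε)
  rw [enormR, enormR, sum_comp_eq_sum_range_multR_nsmul w (· ^ 2) hg hwM,
    sum_comp_eq_sum_range_multR_nsmul v (· ^ 2) hg hvM]
  simp only [hw.multR_add_triangularEnum]
  exact Real.sqrt_le_sqrt <| sum_nsmul_le_sum_nsmul_of_antitone M hq.1.1
    (monotone_sq_add_triangularEnum (abs_le.2 ⟨hε₁.le, hε₂.le⟩))
    fun c hc => hq.card_filter_eq _ hnM hvM hc

/-- For every `ε ∈ (−1/2, 1/2)` and every `v ∈ (ε+ℤ)ⁿ₊`, one has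
`|v_ε(p_ε(v))| ≤ |v|`: the `ε`-triangular arrangement with the same multiset of
multiplicities has minimal Euclidean norm. -/
theorem statement11 (n : ℕ) (hn : 1 ≤ n) (ε : ℝ)
    (hε₁ : -(1 / 2 : ℝ) < ε) (hε₂ : ε < 1 / 2)
    (v : Fin n → ℝ)
    (hv : Antitone v) (hvmem : ∀ i, ∃ k : ℤ, v i = ε + (k : ℝ))
    (q : ℕ → ℕ) (hq : IsPEps n ε v q)
    (w : Fin n → ℝ) (hw : IsVEps n ε q w) :
    enormR w ≤ enormR v :=
  statement11_general n ε hε₁ hε₂ v hvmem q hq w hw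
end
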